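/- Let 0 → E → F → G → 0 be a short exact sequence of sheaves of abelian groups on a topological space X. If E and F are both flasque, then G is flasque. -/

import Mathlib

/-!
If all restrictions `F(X) → F(V)` from global sections are onto, so is every restriction
`F(U) → F(V)`, through which `F(X) → F(V)` factors. With a flasque kernel, Zorn's lemma on partial
lifts makes every `F(U) → G(U)` onto; then `G(X) → G(U)` is onto, since `F(X) → F(U) → G(U)`
factors through it.
-/

open CategoryTheory CategoryTheory.Limits TopologicalSpace Opposite
noncomputable section
universe u
abbrev Shv (X : TopCat.{u}) := Sheaf (Opens.grothendieckTopology X) AddCommGrpCat.{u}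

def IsFlasque {X : TopCat.{u}} (F : Shv X) : Prop :=
  ∀ U : Opens X, Function.Surjective (F.val.map (homOfLE (le_top : U ≤ ⊤)).op)

theorem isFlasque_iff_presheaf_isFlasque {X : TopCat.{u}} (F : Shv X) :
    IsFlasque F ↔ TopCat.Presheaf.IsFlasque F.obj := by
  constructor
  · intro h
    refine ⟨fun {U V} i => (AddCommGrpCat.epi_iff_surjective _).2 fun s => ?_⟩
    obtain ⟨t, rfl⟩ := h V.unop s
    refine ⟨F.obj.map (homOfLE le_top).op t, ?_⟩
    rw [← ConcreteCategory.comp_apply, ← F.obj.map_comp]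
    rfl
  · intro h U
    exact (AddCommGrpCat.epi_iff_surjective _).1 (h.epi _)

/-- **Statement 3.** If `0 → E → F → G → 0` is a short exact sequence of sheaves of abelian
groups on a topological space `X` and both `E` and `F` are flasque, then `G` is flasque. -/
theorem flasque_quotient (X : TopCat.{u}) (S : ShortComplex (Shv X))
    (hS : S.ShortExact) (hE : IsFlasque S.X₁) (hF : IsFlasque S.X₂) :
    IsFlasque S.X₃ := by
  have := (isFlasque_iff_presheaf_isFlasque _).1 hE
  have := (isFlasque_iff_presheaf_isFlasque _).1 hF
  exact (isFlasque_iff_presheaf_isFlasque _).2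
    (TopCat.Sheaf.IsFlasque.of_shortExact_of_isFlasque₁₂ hS)
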